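/- Let G be a group, ι a nonempty index type, x : ι → G a family of elements whose range has normal closure equal to all of G, and i₀ an element of ι. Suppose there exist an element λ in the commutator subgroup of G and a natural number n with λ^n * (x i₀) = 1 in G. Let N be the normal closure in G of the set { (x i) * (x j)⁻¹ : i, j ∈ ι }. Then the quotient group G ⧸ N is perfect, i.e., its commutator subgroup is the whole quotient group. -/

import Mathlib

/-!
In `G ⧸ N` all the generators `x i` become equal to `x i₀`, and the relation `l ^ n * x i₀ = 1`
writes `x i₀` as the inverse of a power of the commutator `l`. So a normally generating set of
the quotient lies in its commutator subgroup, which is normal, hence everything.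
-/

open Subgroup

section

variable {G H : Type*} [Group G] [Group H]

theorem map_mem_commutator (f : G →* H) {g : G} (hg : g ∈ commutator G) :
    f g ∈ commutator H := by
  have hmap : (commutator G).map f ≤ commutator H := by
    rw [map_commutator_eq]
    exact commutator_mono le_top le_top
  exact hmap ⟨g, hg, rfl⟩

theorem mem_commutator_of_pow_mul_eq_one {l g : G} (hl : l ∈ commutator G) {n : ℕ}
    (h : l ^ n * g = 1) : g ∈ commutator G := by
  rw [eq_inv_of_mul_eq_one_right h]
  exact inv_mem (pow_mem hl n)

theorem commutator_eq_top_of_normalClosure_eq_top {s : Set G} (hs : normalClosure s = ⊤)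
    (hsc : s ⊆ commutator G) : commutator G = ⊤ :=
  top_le_iff.1 (hs ▸ normalClosure_le_normal hsc)

theorem QuotientGroup.mk_eq_mk_mod_normalClosure_mul_inv {ι : Type*} (x : ι → G) (i j : ι) :
    (x i : G ⧸ normalClosure {g : G | ∃ i j, g = x i * (x j)⁻¹}) = x j := by
  rw [QuotientGroup.eq_iff_div_mem, div_eq_mul_inv]
  exact subset_normalClosure ⟨i, j, rfl⟩

end

theorem stmt_3_general {G : Type*} [Group G] {ι : Type*} (x : ι → G)
    (hgen : Subgroup.normalClosure (Set.range x) = ⊤) (i₀ : ι)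
    (l : G) (hl : l ∈ commutator G) (n : ℕ) (hrel : l ^ n * x i₀ = 1) :
    commutator (G ⧸ Subgroup.normalClosure {g : G | ∃ i j, g = x i * (x j)⁻¹}) = ⊤ := by
  set f := QuotientGroup.mk' (normalClosure {g : G | ∃ i j, g = x i * (x j)⁻¹})
  have hgenQ : normalClosure (f '' Set.range x) = ⊤ := by
    rw [← map_normalClosure _ f (QuotientGroup.mk'_surjective _), hgen,
      map_top_of_surjective f (QuotientGroup.mk'_surjective _)]
  have hx₀ : f (x i₀) ∈ commutator _ := by
    refine mem_commutator_of_pow_mul_eq_one (map_mem_commutator f hl) (n := n) ?_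
    rw [← map_pow, ← map_mul, hrel, map_one]
  refine commutator_eq_top_of_normalClosure_eq_top hgenQ ?_
  rintro _ ⟨_, ⟨i, rfl⟩, rfl⟩
  change f (x i) ∈ commutator _
  rwa [QuotientGroup.mk'_apply, QuotientGroup.mk_eq_mk_mod_normalClosure_mul_inv x i i₀]

/-- If `G` is normally generated by the family `x : ι → G`, there is a surgery-type
relation `l ^ n * x i₀ = 1` with `l` in the commutator subgroup, and `N` is the normal
closure of the "crossing change" relators `x i * (x j)⁻¹`, then `G ⧸ N` is perfect. -/
theorem stmt_3 {G : Type*} [Group G] {ι : Type*} [Nonempty ι] (x : ι → G)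
    (hgen : Subgroup.normalClosure (Set.range x) = ⊤) (i₀ : ι)
    (l : G) (hl : l ∈ commutator G) (n : ℕ) (hrel : l ^ n * x i₀ = 1) :
    commutator (G ⧸ Subgroup.normalClosure {g : G | ∃ i j, g = x i * (x j)⁻¹}) = ⊤ :=
  stmt_3_general x hgen i₀ l hl n hrel
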